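/- arXiv:1511.08887 — 2 statements merged into one kernel-verified Lean document; each statement's English description precedes it below -/
import Mathlib

section
/- For positive reals M, N and integer K ≥ 1, if 1 ≤ M/N < (9K + √(81K² + 60K))/30, then (2M − (3M² + 2MN)/(9M + N))/K < N. -/
theorem stmt_6 (M N : ℝ) (K : ℕ) (hM : 0 < M) (hN : 0 < N) (hK : 1 ≤ K)
    (h1 : 1 ≤ M / N)
    (h2 : M / N < (9 * K + Real.sqrt (81 * K ^ 2 + 60 * K)) / 30) :
    (2 * M - (3 * M ^ 2 + 2 * M * N) / (9 * M + N)) / K < N := by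
  have hKR : (1:ℝ) ≤ (K:ℝ) := by exact_mod_cast hK
  have hK0 : (0:ℝ) < (K:ℝ) := by linarith
  set s := Real.sqrt (81 * K ^ 2 + 60 * K) with hs
  have hsnn : 0 ≤ s := Real.sqrt_nonneg _
  have hs2 : s ^ 2 = 81 * K ^ 2 + 60 * K := Real.sq_sqrt (by positivity)
  have hsgt : 9 * (K:ℝ) < s := by nlinarith
  have hM' : 30 * M < (9 * K + s) * N := by
    rw [div_lt_div_iff₀ hN (by norm_num : (0:ℝ) < 30)] at h2
    linarith
  have hpos1 : 0 < s * N + 9 * K * N - 30 * M := by nlinarith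
  have hpos2 : 0 < s * N - 9 * K * N + 30 * M := by nlinarith
  have hs2' : s ^ 2 * N ^ 2 = (81 * K ^ 2 + 60 * K) * N ^ 2 := by rw [hs2]
  have key : 15 * M ^ 2 < K * N * (9 * M + N) := by
    nlinarith [mul_pos hpos1 hpos2, hs2']
  have hden : 0 < 9 * M + N := by linarith
  have hq : 2 * M - (3 * M ^ 2 + 2 * M * N) / (9 * M + N) = 15 * M ^ 2 / (9 * M + N) := by
    field_simp
    ring
  rw [hq, div_lt_iff₀ hK0, div_lt_iff₀ hden] at *
  nlinarith [key]
end

section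
/- For fixed ratio c = M/(KN) > 0, with M = cKN and K → ∞, the normalized DoF d*(M,N,K)/(KN) converges to min{c, 1}, where d* = min{3M/2, max{M + 5MN/(9M+N), √(3K)·N/2}, M + K·N²/(3M), K·N}. -/
/-!
`dstar` is positively homogeneous of degree one in the antenna numbers `(M, N)`, so dividing by
`K N` turns the normalized DoF into `dstar c K⁻¹ K`. There the five terms converge, as `K → ∞`,
to `3c/2`, `c`, `0` (the term is `√(3/K)/2`), `c` and `1`, so the limit is
`min (min (3c/2) (max c 0)) (min c 1) = min c 1`.
-/

noncomputable def dstar (M N : ℝ) (K : ℕ) : ℝ :=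
  min (min (3 * M / 2)
      (max (M + 5 * M * N / (9 * M + N)) (Real.sqrt (3 * K) * N / 2)))
    (min (M + K * N ^ 2 / (3 * M)) (K * N))

open Filter Topology

lemma dstar_mul (M N : ℝ) (K : ℕ) {t : ℝ} (ht : 0 < t) :
    dstar (t * M) (t * N) K = t * dstar M N K := by
  have h5 : 5 * (t * M) * (t * N) / (9 * (t * M) + t * N) = t * (5 * M * N / (9 * M + N)) := by
    rw [show 9 * (t * M) + t * N = t * (9 * M + N) by ring,
      show 5 * (t * M) * (t * N) = t * (t * (5 * M * N)) by ring,
      mul_div_mul_left _ _ ht.ne', mul_div_assoc]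
  have h3 : K * (t * N) ^ 2 / (3 * (t * M)) = t * (K * N ^ 2 / (3 * M)) := by
    rw [show 3 * (t * M) = t * (3 * M) by ring,
      show K * (t * N) ^ 2 = t * (t * (K * N ^ 2)) by ring,
      mul_div_mul_left _ _ ht.ne', mul_div_assoc]
  simp only [dstar, mul_min_of_nonneg _ _ ht.le, mul_max_of_nonneg _ _ ht.le, h5, h3]
  ring_nf

lemma mul_inv_sq_eq_inv {K : Type*} [Field K] (x : K) : x * x⁻¹ ^ 2 = x⁻¹ := by
  rcases eq_or_ne x 0 with rfl | hx
  · simp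
  field_simp

lemma Real.sqrt_mul_mul_inv (a : ℝ) {x : ℝ} (hx : 0 ≤ x) : √(a * x) * x⁻¹ = √(a * x⁻¹) :=
  calc √(a * x) * x⁻¹ = √(a * x) * √(x⁻¹ ^ 2) := by rw [Real.sqrt_sq (inv_nonneg.2 hx)]
    _ = √(a * x * x⁻¹ ^ 2) := (Real.sqrt_mul' _ (sq_nonneg _)).symm
    _ = √(a * x⁻¹) := by rw [mul_assoc, mul_inv_sq_eq_inv]

lemma tendsto_dstar_inv_natCast {c : ℝ} (hc : 0 < c) :
    Tendsto (fun K : ℕ => dstar c (K : ℝ)⁻¹ K) atTop (𝓝 (min c 1)) := by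
  have hinv : Tendsto (fun K : ℕ => (K : ℝ)⁻¹) atTop (𝓝 0) :=
    tendsto_inv_atTop_nhds_zero_nat
  have hrational : Tendsto (fun K : ℕ => c + 5 * c * (K : ℝ)⁻¹ / (9 * c + (K : ℝ)⁻¹))
      atTop (𝓝 c) := by
    simpa using tendsto_const_nhds.add ((tendsto_const_nhds.mul hinv).div
      (tendsto_const_nhds.add hinv) (by positivity : 9 * c + 0 ≠ 0))
  have hsqrt : Tendsto (fun K : ℕ => √(3 * K) * (K : ℝ)⁻¹ / 2) atTop (𝓝 0) := by
    simp_rw [Real.sqrt_mul_mul_inv 3 (Nat.cast_nonneg _)]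
    have h3inv : Tendsto (fun K : ℕ => 3 * (K : ℝ)⁻¹) atTop (𝓝 0) := by
      simpa using hinv.const_mul 3
    simpa using ((Real.continuous_sqrt.tendsto 0).comp h3inv).div_const 2
  have hquad : Tendsto (fun K : ℕ => c + K * ((K : ℝ)⁻¹) ^ 2 / (3 * c)) atTop (𝓝 c) := by
    simp_rw [mul_inv_sq_eq_inv]
    simpa using tendsto_const_nhds.add (hinv.div_const (3 * c))
  have hone : Tendsto (fun K : ℕ => (K : ℝ) * (K : ℝ)⁻¹) atTop (𝓝 1) :=
    tendsto_const_nhds.congr' <| (eventually_ne_atTop 0).mono fun K hK =>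
      (mul_inv_cancel₀ (Nat.cast_ne_zero.2 hK)).symm
  have hlim : min (min (3 * c / 2) (max c 0)) (min c 1) = min c 1 := by
    rw [max_eq_left hc.le, min_eq_right (by linarith : c ≤ 3 * c / 2), ← min_assoc, min_self]
  rw [← hlim]
  exact (tendsto_const_nhds.min (hrational.max hsqrt)).min (hquad.min hone)

theorem stmt_19 (c N : ℝ) (hc : 0 < c) (hN : 0 < N) :
    Filter.Tendsto (fun K : ℕ => dstar (c * (K * N)) N K / (K * N))
      Filter.atTop (nhds (min c 1)) := by
  refine (tendsto_dstar_inv_natCast hc).congr' ?_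
  filter_upwards [eventually_gt_atTop 0] with K hK
  have hK : (0 : ℝ) < K := Nat.cast_pos.2 hK
  have hKN : 0 < (K : ℝ) * N := mul_pos hK hN
  have hscale := dstar_mul c (K : ℝ)⁻¹ K hKN
  rw [mul_comm _ (K : ℝ)⁻¹, inv_mul_cancel_left₀ hK.ne', mul_comm _ c] at hscale
  rw [hscale, mul_div_cancel_left₀ _ hKN.ne']
end
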